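/- arXiv:1504.02811 — 7 statements merged into one kernel-verified Lean document; each statement's English description precedes it below -/
import Mathlib

section
/- Assume that neither a nor b is an eigenvalue of T(·), i.e., the matrices T(a) and T(b) are invertible. Then the interval J = (a,b) is of positive type if and only if T(a) is negative definite and T(b) is positive definite. -/
open Matrix Set
open scoped ComplexOrder

/-!
For `x ≠ 0` the real function `μ ↦ x* T(μ) x` is continuous on `[a, b]` and vanishes in `(a, b)`
only at `ρ x`. Positive type means it is negative to the left of `ρ x` and positive to the right,
so by continuity it is `≤ 0` at `a` and `≥ 0` at `b`; invertibility of `T a`, `T b` upgrades these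
semidefinite endpoints to definite ones. Conversely, definite endpoints give strict signs at `a`
and `b`, and the intermediate value theorem forbids any further sign change.
-/

section SignChange

variable {f : ℝ → ℝ} {a b r : ℝ}

theorem nonpos_left_nonneg_right_of_sign_change (hf : ContinuousOn f (Icc a b))
    (hr : r ∈ Ioo a b) (hsign : ∀ μ ∈ Ioo a b, μ ≠ r → 0 < (μ - r) * f μ) :
    f a ≤ 0 ∧ 0 ≤ f b := by
  constructor
  · have hneg : ∀ μ ∈ Ioo a r, f μ ≤ 0 := fun μ hμ =>
      nonpos_of_mul_nonneg_right (hsign μ ⟨hμ.1, hμ.2.trans hr.2⟩ hμ.2.ne).le (by linarith [hμ.2])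
    have hcl : closure (Ioo a r) = Icc a r := closure_Ioo hr.1.ne
    exact le_on_closure (g := fun _ => 0) hneg (hcl ▸ hf.mono (Icc_subset_Icc_right hr.2.le))
      continuousOn_const (hcl ▸ left_mem_Icc.2 hr.1.le)
  · have hpos : ∀ μ ∈ Ioo r b, 0 ≤ f μ := fun μ hμ =>
      (pos_of_mul_pos_right (hsign μ ⟨hr.1.trans hμ.1, hμ.2⟩ hμ.1.ne') (by linarith [hμ.1])).le
    have hcl : closure (Ioo r b) = Icc r b := closure_Ioo hr.2.ne
    exact le_on_closure (f := fun _ => 0) hpos continuousOn_const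
      (hcl ▸ hf.mono (Icc_subset_Icc_left hr.1.le)) (hcl ▸ right_mem_Icc.2 hr.2.le)

theorem sign_change_of_neg_left_of_pos_right (hf : ContinuousOn f (Icc a b))
    (hfa : f a < 0) (hfb : 0 < f b) (hzero : ∀ μ ∈ Ioo a b, f μ = 0 → μ = r) :
    ∀ μ ∈ Ioo a b, μ ≠ r → 0 < (μ - r) * f μ := by
  intro μ hμ hμr
  have hfμ : f μ ≠ 0 := fun h => hμr (hzero μ hμ h)
  rcases hμr.lt_or_gt with hlt | hgt
  · refine mul_pos_of_neg_of_neg (by linarith) (hfμ.lt_of_le ?_)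
    by_contra! hpos
    obtain ⟨ν, hν, hν0⟩ := intermediate_value_Ioo hμ.1.le (hf.mono (Icc_subset_Icc_right hμ.2.le))
      ⟨hfa, hpos⟩
    linarith [hzero ν ⟨hν.1, hν.2.trans hμ.2⟩ hν0, hν.2]
  · refine mul_pos (by linarith) (hfμ.symm.lt_of_le ?_)
    by_contra! hneg
    obtain ⟨ν, hν, hν0⟩ := intermediate_value_Ioo hμ.2.le (hf.mono (Icc_subset_Icc_left hμ.1.le))
      ⟨hneg, hfb⟩
    linarith [hzero ν ⟨hμ.1.trans hν.1, hν.2⟩ hν0, hν.1]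

end SignChange

namespace Matrix

variable {𝕜 ι : Type*} [RCLike 𝕜] [Fintype ι] {A : Matrix ι ι 𝕜}

theorem IsHermitian.coe_re_star_dotProduct_mulVec_self (hA : A.IsHermitian) (x : ι → 𝕜) :
    (RCLike.re (star x ⬝ᵥ A *ᵥ x) : 𝕜) = star x ⬝ᵥ A *ᵥ x :=
  RCLike.conj_eq_iff_re.1 (RCLike.conj_eq_iff_im.2 (hA.im_star_dotProduct_mulVec_self x))

theorem IsHermitian.posDef_of_isUnit_of_re_nonneg [DecidableEq ι] (hA : A.IsHermitian)
    (hU : IsUnit A) (h : ∀ x, x ≠ 0 → 0 ≤ RCLike.re (star x ⬝ᵥ A *ᵥ x)) : A.PosDef := by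
  refine (PosSemidef.of_dotProduct_mulVec_nonneg hA fun x => ?_).posDef_iff_isUnit.2 hU
  rcases eq_or_ne x 0 with rfl | hx
  · simp
  · rw [← hA.coe_re_star_dotProduct_mulVec_self]
    exact RCLike.ofReal_nonneg.2 (h x hx)

end Matrix

theorem interval_positive_type_iff_endpoints_definite_general
    (n : ℕ) (a b : ℝ) (hab : a < b)
    (T : ℝ → Matrix (Fin n) (Fin n) ℂ)
    (hTcont : ContinuousOn T (Set.Icc a b))
    (hTherm : ∀ μ ∈ Set.Icc a b, (T μ).IsHermitian)
    (ρ : (Fin n → ℂ) → ℝ)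
    (hρmem : ∀ x : Fin n → ℂ, x ≠ 0 → ρ x ∈ Set.Ioo a b)
    (hρuniq : ∀ x : Fin n → ℂ, x ≠ 0 → ∀ μ ∈ Set.Ioo a b,
      star x ⬝ᵥ (T μ) *ᵥ x = 0 → μ = ρ x)
    (hTa : IsUnit (T a)) (hTb : IsUnit (T b)) :
    (∀ x : Fin n → ℂ, x ≠ 0 → ∀ μ ∈ Set.Ioo a b, μ ≠ ρ x →
        0 < (μ - ρ x) * (star x ⬝ᵥ (T μ) *ᵥ x).re) ↔
      ((-(T a)).PosDef ∧ (T b).PosDef) := by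
  have hq (x : Fin n → ℂ) : ContinuousOn (fun μ => (star x ⬝ᵥ T μ *ᵥ x).re) (Icc a b) := by
    fun_prop
  constructor
  · intro hsign
    have hend (x : Fin n → ℂ) (hx : x ≠ 0) :=
      nonpos_left_nonneg_right_of_sign_change (hq x) (hρmem x hx) (hsign x hx)
    exact ⟨(hTherm a (left_mem_Icc.2 hab.le)).neg.posDef_of_isUnit_of_re_nonneg hTa.neg
        fun x hx => by simpa [neg_mulVec] using (hend x hx).1,
      (hTherm b (right_mem_Icc.2 hab.le)).posDef_of_isUnit_of_re_nonneg hTb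
        fun x hx => (hend x hx).2⟩
  · rintro ⟨hA, hB⟩ x hx
    refine sign_change_of_neg_left_of_pos_right (hq x) ?_ (hB.re_dotProduct_pos hx)
      fun μ hμ h0 => ?_
    · simpa [neg_mulVec] using hA.re_dotProduct_pos hx
    · refine hρuniq x hx μ hμ ?_
      rw [← (hTherm μ (Ioo_subset_Icc_self hμ)).coe_re_star_dotProduct_mulVec_self x]
      exact Complex.ofReal_eq_zero.2 h0

/-- Assuming neither `a` nor `b` is an eigenvalue of `T(·)`
(i.e. `T a`, `T b` are invertible), the interval `J = (a,b)` is of positive type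
if and only if `T a` is negative definite and `T b` is positive definite. -/
theorem interval_positive_type_iff_endpoints_definite
    (n : ℕ) (hn : 1 ≤ n) (a b : ℝ) (hab : a < b)
    (T : ℝ → Matrix (Fin n) (Fin n) ℂ)
    (hTcont : ContinuousOn T (Set.Icc a b))
    (hTherm : ∀ μ ∈ Set.Icc a b, (T μ).IsHermitian)
    (ρ : (Fin n → ℂ) → ℝ)
    (hρcont : ContinuousOn ρ {x : Fin n → ℂ | x ≠ 0})
    (hρmem : ∀ x : Fin n → ℂ, x ≠ 0 → ρ x ∈ Set.Ioo a b)
    (hρroot : ∀ x : Fin n → ℂ, x ≠ 0 → star x ⬝ᵥ (T (ρ x)) *ᵥ x = 0)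
    (hρuniq : ∀ x : Fin n → ℂ, x ≠ 0 → ∀ μ ∈ Set.Ioo a b,
      star x ⬝ᵥ (T μ) *ᵥ x = 0 → μ = ρ x)
    (hTa : IsUnit (T a)) (hTb : IsUnit (T b)) :
    (∀ x : Fin n → ℂ, x ≠ 0 → ∀ μ ∈ Set.Ioo a b, μ ≠ ρ x →
        0 < (μ - ρ x) * (star x ⬝ᵥ (T μ) *ᵥ x).re) ↔
      ((-(T a)).PosDef ∧ (T b).PosDef) :=
  interval_positive_type_iff_endpoints_definite_general n a b hab T hTcont hTherm ρ hρmem hρuniq hTa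
    hTb
end

section
/- Assume that neither a nor b is an eigenvalue of T(·), i.e., the matrices T(a) and T(b) are invertible. Then the interval J = (a,b) is of negative type if and only if T(a) is positive definite and T(b) is negative definite. -/
open Matrix Set
open scoped ComplexOrder

/-!
For `x ≠ 0` the real function `μ ↦ x* T(μ) x` is continuous and vanishes in `(a, b)` only at
`ρ(x)`. Negative type says it is positive on `(a, ρ(x))` and negative on `(ρ(x), b)`; by
continuity this forces `x* T(a) x ≥ 0 ≥ x* T(b) x`, and semidefiniteness upgrades to
definiteness because `T(a)` and `T(b)` are invertible. Conversely, if the endpoint values have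
strict signs, the intermediate value theorem keeps each sign up to the only zero `ρ(x)`.
-/

theorem IsPreconnected.pos_of_pos_of_ne_zero {α : Type*} [TopologicalSpace α] {s : Set α}
    (hs : IsPreconnected s) {f : α → ℝ} (hf : ContinuousOn f s) (hne : ∀ c ∈ s, f c ≠ 0)
    {x y : α} (hx : x ∈ s) (hy : y ∈ s) (hfx : 0 < f x) : 0 < f y := by
  by_contra! hfy
  obtain ⟨c, hc, hfc⟩ := hs.intermediate_value hy hx hf ⟨hfy, hfx.le⟩
  exact hne c hc hfc

theorem endpoint_signs_of_sign_change {f : ℝ → ℝ} {a b r : ℝ} (hf : ContinuousOn f (Icc a b))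
    (hr : r ∈ Ioo a b) (h : ∀ μ ∈ Ioo a b, μ ≠ r → (μ - r) * f μ < 0) :
    0 ≤ f a ∧ f b ≤ 0 := by
  have hleft : MapsTo f (Ioo a r) (Ioi 0) := fun μ hμ =>
    pos_of_mul_neg_right (h μ ⟨hμ.1, hμ.2.trans hr.2⟩ hμ.2.ne) (sub_neg.2 hμ.2).le
  have hright : MapsTo f (Ioo r b) (Iio 0) := fun μ hμ =>
    neg_of_mul_neg_right (h μ ⟨hr.1.trans hμ.1, hμ.2⟩ hμ.1.ne') (sub_pos.2 hμ.1).le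
  have hnonneg := hleft.closure_of_continuousOn
    (by rw [closure_Ioo hr.1.ne]; exact hf.mono (Icc_subset_Icc_right hr.2.le))
  have hnonpos := hright.closure_of_continuousOn
    (by rw [closure_Ioo hr.2.ne]; exact hf.mono (Icc_subset_Icc_left hr.1.le))
  rw [closure_Ioo hr.1.ne, closure_Ioi] at hnonneg
  rw [closure_Ioo hr.2.ne, closure_Iio] at hnonpos
  exact ⟨hnonneg (left_mem_Icc.2 hr.1.le), hnonpos (right_mem_Icc.2 hr.2.le)⟩

theorem sign_change_of_endpoint_signs {f : ℝ → ℝ} {a b r : ℝ} (hf : ContinuousOn f (Icc a b))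
    (huniq : ∀ c ∈ Ioo a b, f c = 0 → c = r) (ha : 0 < f a) (hb : f b < 0) :
    ∀ μ ∈ Ioo a b, μ ≠ r → (μ - r) * f μ < 0 := by
  have hne : ∀ c ∈ Icc a b, c ≠ r → f c ≠ 0 := fun c hc hcr h0 => by
    rcases eq_or_ne c a with rfl | hca
    · exact ha.ne' h0
    rcases eq_or_ne c b with rfl | hcb
    · exact hb.ne h0
    exact hcr (huniq c ⟨lt_of_le_of_ne hc.1 hca.symm, lt_of_le_of_ne hc.2 hcb⟩ h0)
  intro μ hμ hμr
  rcases hμr.lt_or_gt with hlt | hgt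
  · have : 0 < f μ := isPreconnected_Icc.pos_of_pos_of_ne_zero
      (hf.mono (Icc_subset_Icc_right hμ.2.le))
      (fun c hc => hne c ⟨hc.1, hc.2.trans hμ.2.le⟩ (hc.2.trans_lt hlt).ne)
      (left_mem_Icc.2 hμ.1.le) (right_mem_Icc.2 hμ.1.le) ha
    exact mul_neg_of_neg_of_pos (sub_neg.2 hlt) this
  · have : 0 < -f μ := isPreconnected_Icc.pos_of_pos_of_ne_zero
      (hf.mono (Icc_subset_Icc_left hμ.1.le)).neg
      (fun c hc => neg_ne_zero.2 (hne c ⟨hμ.1.le.trans hc.1, hc.2⟩ (hgt.trans_le hc.1).ne'))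
      (right_mem_Icc.2 hμ.2.le) (left_mem_Icc.2 hμ.2.le) (neg_pos.2 hb)
    exact mul_neg_of_pos_of_neg (sub_pos.2 hgt) (neg_pos.1 this)

theorem Matrix.IsHermitian.posDef_of_isUnit_of_re_dotProduct_nonneg {ι 𝕜 : Type*} [Fintype ι]
    [DecidableEq ι] [RCLike 𝕜] {A : Matrix ι ι 𝕜} (hA : A.IsHermitian) (hu : IsUnit A)
    (h : ∀ x, x ≠ 0 → 0 ≤ RCLike.re (star x ⬝ᵥ A *ᵥ x)) : A.PosDef := by
  refine (PosSemidef.of_dotProduct_mulVec_nonneg hA fun x => ?_).posDef_iff_isUnit.2 hu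
  rcases eq_or_ne x 0 with rfl | hx
  · simp
  exact RCLike.nonneg_iff.2 ⟨h x hx, hA.im_star_dotProduct_mulVec_self x⟩

theorem interval_negative_type_iff_endpoints_definite_general
    (n : ℕ) (a b : ℝ) (hab : a < b)
    (T : ℝ → Matrix (Fin n) (Fin n) ℂ)
    (hTcont : ContinuousOn T (Set.Icc a b))
    (hTherm : ∀ μ ∈ Set.Icc a b, (T μ).IsHermitian)
    (ρ : (Fin n → ℂ) → ℝ)
    (hρmem : ∀ x : Fin n → ℂ, x ≠ 0 → ρ x ∈ Set.Ioo a b)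
    (hρuniq : ∀ x : Fin n → ℂ, x ≠ 0 → ∀ μ ∈ Set.Ioo a b,
      star x ⬝ᵥ (T μ) *ᵥ x = 0 → μ = ρ x)
    (hTa : IsUnit (T a)) (hTb : IsUnit (T b)) :
    (∀ x : Fin n → ℂ, x ≠ 0 → ∀ μ ∈ Set.Ioo a b, μ ≠ ρ x →
        (μ - ρ x) * (star x ⬝ᵥ (T μ) *ᵥ x).re < 0) ↔
      ((T a).PosDef ∧ (-(T b)).PosDef) := by
  have hq : ∀ x : Fin n → ℂ, ContinuousOn (fun μ => (star x ⬝ᵥ T μ *ᵥ x).re) (Icc a b) := by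
    intro x; fun_prop
  have hHa := hTherm a (left_mem_Icc.2 hab.le)
  have hHb := hTherm b (right_mem_Icc.2 hab.le)
  constructor
  · intro H
    have hend x (hx : x ≠ 0) := endpoint_signs_of_sign_change (hq x) (hρmem x hx) (H x hx)
    refine ⟨hHa.posDef_of_isUnit_of_re_dotProduct_nonneg hTa fun x hx => (hend x hx).1,
      hHb.neg.posDef_of_isUnit_of_re_dotProduct_nonneg hTb.neg fun x hx => ?_⟩
    simpa [neg_mulVec] using (hend x hx).2
  · rintro ⟨hPa, hPb⟩ x hx
    refine sign_change_of_endpoint_signs (hq x) (fun c hc h0 => hρuniq x hx c hc ?_)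
      (hPa.re_dotProduct_pos hx) (by simpa [neg_mulVec] using hPb.re_dotProduct_pos hx)
    exact Complex.ext h0 ((hTherm c (Ioo_subset_Icc_self hc)).im_star_dotProduct_mulVec_self x)

/-- Assuming neither `a` nor `b` is an eigenvalue of `T(·)`
(i.e. `T a`, `T b` are invertible), the interval `J = (a,b)` is of negative type
if and only if `T a` is positive definite and `T b` is negative definite. -/
theorem interval_negative_type_iff_endpoints_definite
    (n : ℕ) (hn : 1 ≤ n) (a b : ℝ) (hab : a < b)
    (T : ℝ → Matrix (Fin n) (Fin n) ℂ)
    (hTcont : ContinuousOn T (Set.Icc a b))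
    (hTherm : ∀ μ ∈ Set.Icc a b, (T μ).IsHermitian)
    (ρ : (Fin n → ℂ) → ℝ)
    (hρcont : ContinuousOn ρ {x : Fin n → ℂ | x ≠ 0})
    (hρmem : ∀ x : Fin n → ℂ, x ≠ 0 → ρ x ∈ Set.Ioo a b)
    (hρroot : ∀ x : Fin n → ℂ, x ≠ 0 → star x ⬝ᵥ (T (ρ x)) *ᵥ x = 0)
    (hρuniq : ∀ x : Fin n → ℂ, x ≠ 0 → ∀ μ ∈ Set.Ioo a b,
      star x ⬝ᵥ (T μ) *ᵥ x = 0 → μ = ρ x)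
    (hTa : IsUnit (T a)) (hTb : IsUnit (T b)) :
    (∀ x : Fin n → ℂ, x ≠ 0 → ∀ μ ∈ Set.Ioo a b, μ ≠ ρ x →
        (μ - ρ x) * (star x ⬝ᵥ (T μ) *ᵥ x).re < 0) ↔
      ((T a).PosDef ∧ (-(T b)).PosDef) :=
  interval_negative_type_iff_endpoints_definite_general n a b hab T hTcont hTherm ρ hρmem hρuniq hTa
    hTb
end

section
/- Assume that neither a nor b is an eigenvalue of T(·) (T(a) and T(b) are invertible) and that T is continuously differentiable on (a,b). If x*T'(ρ(x))x > 0 for every nonzero x ∈ ℂ^n, then the interval J = (a,b) is of positive type. -/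
/-!
For fixed `x ≠ 0` the function `f μ = x* T(μ) x` is real (Hermiticity) and differentiable on
`(a, b)`, its only zero there is `ρ(x)`, and `f' (ρ(x)) > 0`. So `f` is positive just to the
right of `ρ(x)` and negative just to the left; having no further zero, by the intermediate value
theorem it keeps these signs on all of `(ρ(x), b)` and `(a, ρ(x))`.
-/

open Matrix Set Filter Topology

theorem HasDerivAt.eventually_lt_nhdsGT {f : ℝ → ℝ} {d r : ℝ} (hd : HasDerivAt f d r)
    (hd0 : 0 < d) : ∀ᶠ t in 𝓝[>] r, f r < f t := by
  have hslope : Tendsto (slope f r) (𝓝[>] r) (𝓝 d) :=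
    (hasDerivAt_iff_tendsto_slope.mp hd).mono_left (nhdsWithin_mono r fun t ht => ne_of_gt ht)
  filter_upwards [hslope.eventually (eventually_gt_nhds hd0), self_mem_nhdsWithin]
    with t hpos (hrt : r < t)
  rw [slope_def_field, div_pos_iff_of_pos_right (sub_pos.mpr hrt)] at hpos
  linarith

theorem pos_of_hasDerivAt_pos_of_ne_zero {f : ℝ → ℝ} {r μ d : ℝ} (hrμ : r < μ)
    (hf : ContinuousOn f (Ioc r μ)) (hd : HasDerivAt f d r) (hd0 : 0 < d) (hfr : f r = 0)
    (hne : ∀ t ∈ Ioc r μ, f t ≠ 0) : 0 < f μ := by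
  obtain ⟨t, hft, htμ⟩ :=
    ((hd.eventually_lt_nhdsGT hd0).and (Ioo_mem_nhdsGT hrμ)).exists
  rw [hfr] at hft
  by_contra! hfμ
  obtain ⟨c, hc, hfc⟩ := isPreconnected_Ioc.intermediate_value (right_mem_Ioc.mpr hrμ)
    (Ioo_subset_Ioc_self htμ) hf ⟨hfμ, hft.le⟩
  exact hne c hc hfc

theorem sub_mul_pos_of_hasDerivAt_pos_of_ne_zero {f : ℝ → ℝ} {s : Set ℝ} {r d μ : ℝ}
    (hs : s.OrdConnected) (hf : ContinuousOn f s) (hr : r ∈ s) (hμ : μ ∈ s) (hμr : μ ≠ r)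
    (hd : HasDerivAt f d r) (hd0 : 0 < d) (hfr : f r = 0)
    (hne : ∀ t ∈ s, t ≠ r → f t ≠ 0) : 0 < (μ - r) * f μ := by
  rcases hμr.lt_or_gt with hμr | hrμ
  · have hmaps : MapsTo Neg.neg (Ioc (-r) (-μ)) s := fun t ht =>
      hs.out hμ hr ⟨by linarith [ht.2], by linarith [ht.1]⟩
    -- reflect to `t ↦ -f (-t)`, which vanishes at `-r` with the same derivative `d`
    have hd' : HasDerivAt (fun t => -f (-t)) d (-r) := by
      rw [← neg_neg r] at hd
      simpa [Function.comp_def] using (hd.comp (-r) (hasDerivAt_neg (-r))).fun_neg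
    have hpos : 0 < -f μ := by
      simpa using pos_of_hasDerivAt_pos_of_ne_zero (f := fun t => -f (-t)) (neg_lt_neg hμr)
        (hf.comp continuousOn_neg hmaps).neg hd' hd0 (by simp [hfr])
        fun t ht => neg_ne_zero.mpr <| hne (-t) (hmaps ht) (by linarith [ht.1])
    nlinarith
  · exact mul_pos (sub_pos.mpr hrμ) <| pos_of_hasDerivAt_pos_of_ne_zero hrμ
      (hf.mono fun t ht => hs.out hr hμ (Ioc_subset_Icc_self ht)) hd hd0 hfr
      fun t ht => hne t (hs.out hr hμ (Ioc_subset_Icc_self ht)) ht.1.ne'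

theorem hasDerivAt_dotProduct_mulVec {𝕜 𝔸 ι : Type*} [NontriviallyNormedField 𝕜]
    [NormedRing 𝔸] [NormedAlgebra 𝕜 𝔸] [Fintype ι] {A : 𝕜 → Matrix ι ι 𝔸} {A' : Matrix ι ι 𝔸}
    {t : 𝕜} (hA : ∀ i j, HasDerivAt (fun s => A s i j) (A' i j) t) (y x : ι → 𝔸) :
    HasDerivAt (fun s => y ⬝ᵥ A s *ᵥ x) (y ⬝ᵥ A' *ᵥ x) t := by
  simp only [dotProduct, mulVec]
  exact HasDerivAt.fun_sum fun i _ =>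
    (HasDerivAt.fun_sum fun j _ => (hA i j).mul_const (x j)).const_mul (y i)

theorem interval_positive_type_of_deriv_pos_general
    (n : ℕ) (a b : ℝ)
    (T T' : ℝ → Matrix (Fin n) (Fin n) ℂ)
    (hTherm : ∀ μ ∈ Set.Icc a b, (T μ).IsHermitian)
    (hT'deriv : ∀ μ ∈ Set.Ioo a b, ∀ i j : Fin n,
      HasDerivAt (fun t : ℝ => T t i j) (T' μ i j) μ)
    (ρ : (Fin n → ℂ) → ℝ)
    (hρmem : ∀ x : Fin n → ℂ, x ≠ 0 → ρ x ∈ Set.Ioo a b)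
    (hρroot : ∀ x : Fin n → ℂ, x ≠ 0 → star x ⬝ᵥ (T (ρ x)) *ᵥ x = 0)
    (hρuniq : ∀ x : Fin n → ℂ, x ≠ 0 → ∀ μ ∈ Set.Ioo a b,
      star x ⬝ᵥ (T μ) *ᵥ x = 0 → μ = ρ x)
    (hderiv_pos : ∀ x : Fin n → ℂ, x ≠ 0 → 0 < (star x ⬝ᵥ (T' (ρ x)) *ᵥ x).re) :
    ∀ x : Fin n → ℂ, x ≠ 0 → ∀ μ ∈ Set.Ioo a b, μ ≠ ρ x →
      0 < (μ - ρ x) * (star x ⬝ᵥ (T μ) *ᵥ x).re := by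
  intro x hx μ hμ hμρ
  have hf : ∀ t ∈ Ioo a b,
      HasDerivAt (fun s => (star x ⬝ᵥ T s *ᵥ x).re) (star x ⬝ᵥ T' t *ᵥ x).re t := fun t ht =>
    Complex.reCLM.hasFDerivAt.comp_hasDerivAt t (hasDerivAt_dotProduct_mulVec (hT'deriv t ht) _ _)
  refine sub_mul_pos_of_hasDerivAt_pos_of_ne_zero ordConnected_Ioo
    (fun t ht => (hf t ht).continuousAt.continuousWithinAt) (hρmem x hx) hμ hμρ
    (hf _ (hρmem x hx)) (hderiv_pos x hx) (by simp [hρroot x hx]) ?_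
  intro t ht htρ hre
  have him := (hTherm t (Ioo_subset_Icc_self ht)).im_star_dotProduct_mulVec_self x
  exact htρ (hρuniq x hx t ht (Complex.ext hre him))

/-- If `T a`, `T b` are invertible, `T` is continuously differentiable on
`(a,b)` with derivative `T'`, and `x* T'(ρ(x)) x > 0` for every nonzero `x`, then the
interval `(a,b)` is of positive type. -/
theorem interval_positive_type_of_deriv_pos
    (n : ℕ) (hn : 1 ≤ n) (a b : ℝ) (hab : a < b)
    (T T' : ℝ → Matrix (Fin n) (Fin n) ℂ)
    (hTcont : ContinuousOn T (Set.Icc a b))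
    (hTherm : ∀ μ ∈ Set.Icc a b, (T μ).IsHermitian)
    (hT'deriv : ∀ μ ∈ Set.Ioo a b, ∀ i j : Fin n,
      HasDerivAt (fun t : ℝ => T t i j) (T' μ i j) μ)
    (hT'cont : ContinuousOn T' (Set.Ioo a b))
    (ρ : (Fin n → ℂ) → ℝ)
    (hρcont : ContinuousOn ρ {x : Fin n → ℂ | x ≠ 0})
    (hρmem : ∀ x : Fin n → ℂ, x ≠ 0 → ρ x ∈ Set.Ioo a b)
    (hρroot : ∀ x : Fin n → ℂ, x ≠ 0 → star x ⬝ᵥ (T (ρ x)) *ᵥ x = 0)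
    (hρuniq : ∀ x : Fin n → ℂ, x ≠ 0 → ∀ μ ∈ Set.Ioo a b,
      star x ⬝ᵥ (T μ) *ᵥ x = 0 → μ = ρ x)
    (hTa : IsUnit (T a)) (hTb : IsUnit (T b))
    (hderiv_pos : ∀ x : Fin n → ℂ, x ≠ 0 → 0 < (star x ⬝ᵥ (T' (ρ x)) *ᵥ x).re) :
    ∀ x : Fin n → ℂ, x ≠ 0 → ∀ μ ∈ Set.Ioo a b, μ ≠ ρ x →
      0 < (μ - ρ x) * (star x ⬝ᵥ (T μ) *ᵥ x).re :=
  interval_positive_type_of_deriv_pos_general n a b T T' hTherm hT'deriv ρ hρmem hρroot hρuniq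
    hderiv_pos
end

section
/- Assume that neither a nor b is an eigenvalue of T(·) (T(a) and T(b) are invertible) and that T is continuously differentiable on (a,b). If x*T'(ρ(x))x < 0 for every nonzero x ∈ ℂ^n, then the interval J = (a,b) is of negative type. -/
open Matrix Set

/-!
Fix `x ≠ 0` and let `g μ = x* T(μ) x`, which is real, differentiable on `(a,b)` and vanishes there
only at `ρ x`. As `g' (ρ x) < 0`, `g` is positive just left of `ρ x` and negative just right of it;
having no other zero, by the intermediate value theorem it keeps these signs on all of `(a, ρ x)`
and `(ρ x, b)`.
-/

section SignOfRealFunction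

variable {α : Type*} [TopologicalSpace α] {s : Set α} {g : α → ℝ} {x y : α}

theorem IsPreconnected.neg_of_neg (hs : IsPreconnected s) (hg : ContinuousOn g s)
    (hzero : ∀ z ∈ s, g z ≠ 0) (hx : x ∈ s) (hy : y ∈ s) (hgx : g x < 0) : g y < 0 := by
  by_contra! hgy
  obtain ⟨z, hz, hgz⟩ := hs.intermediate_value hx hy hg ⟨hgx.le, hgy⟩
  exact hzero z hz hgz

theorem IsPreconnected.pos_of_pos (hs : IsPreconnected s) (hg : ContinuousOn g s)
    (hzero : ∀ z ∈ s, g z ≠ 0) (hx : x ∈ s) (hy : y ∈ s) (hgx : 0 < g x) : 0 < g y := by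
  by_contra! hgy
  obtain ⟨z, hz, hgz⟩ := hs.intermediate_value hy hx hg ⟨hgy, hgx.le⟩
  exact hzero z hz hgz

end SignOfRealFunction

theorem sub_mul_neg_of_hasDerivAt_neg_of_unique_zero {g : ℝ → ℝ} {g' a b r μ : ℝ}
    (hg : ContinuousOn g (Ioo a b)) (hr : r ∈ Ioo a b) (hgr : g r = 0)
    (hderiv : HasDerivAt g g' r) (hg' : g' < 0) (hzero : ∀ t ∈ Ioo a b, g t = 0 → t = r)
    (hμ : μ ∈ Ioo a b) (hne : μ ≠ r) : (μ - r) * g μ < 0 := by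
  have hsign := eventually_nhdsWithin_sign_eq_of_deriv_neg (hderiv.deriv ▸ hg') hgr
  rcases hne.lt_or_gt with hlt | hgt
  · obtain ⟨ν, hgν, hμν, hνr⟩ :=
      ((hsign.filter_mono nhdsWithin_le_nhds).and (Ioo_mem_nhdsLT hlt)).exists
    rw [sign_pos (sub_pos.2 hνr), sign_eq_one_iff] at hgν
    have hgμ : 0 < g μ :=
      isPreconnected_Ioo.pos_of_pos (hg.mono (Ioo_subset_Ioo_right hr.2.le))
        (fun t ht h0 => ht.2.ne (hzero t ⟨ht.1, ht.2.trans hr.2⟩ h0))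
        ⟨hμ.1.trans hμν, hνr⟩ ⟨hμ.1, hlt⟩ hgν
    exact mul_neg_of_neg_of_pos (sub_neg.2 hlt) hgμ
  · obtain ⟨ν, hgν, hrν, hνμ⟩ :=
      ((hsign.filter_mono nhdsWithin_le_nhds).and (Ioo_mem_nhdsGT hgt)).exists
    rw [sign_neg (sub_neg.2 hrν), sign_eq_neg_one_iff] at hgν
    have hgμ : g μ < 0 :=
      isPreconnected_Ioo.neg_of_neg (hg.mono (Ioo_subset_Ioo_left hr.1.le))
        (fun t ht h0 => ht.1.ne' (hzero t ⟨hr.1.trans ht.1, ht.2⟩ h0))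
        ⟨hrν, hνμ.trans hμ.2⟩ ⟨hgt, hμ.2⟩ hgν
    exact mul_neg_of_pos_of_neg (sub_pos.2 hgt) hgμ

theorem hasDerivAt_star_dotProduct_mulVec {𝕜 ι : Type*} [RCLike 𝕜] [Fintype ι]
    {A A' : ℝ → Matrix ι ι 𝕜} {μ : ℝ} (hA : ∀ i j, HasDerivAt (fun t => A t i j) (A' μ i j) μ)
    (x : ι → 𝕜) : HasDerivAt (fun t => star x ⬝ᵥ A t *ᵥ x) (star x ⬝ᵥ A' μ *ᵥ x) μ := by
  simp only [dotProduct, mulVec]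
  exact HasDerivAt.fun_sum fun i _ =>
    (HasDerivAt.fun_sum fun j _ => (hA i j).mul_const (x j)).const_mul (star x i)

theorem interval_negative_type_of_deriv_neg_general
    (n : ℕ) (a b : ℝ)
    (T T' : ℝ → Matrix (Fin n) (Fin n) ℂ)
    (hTherm : ∀ μ ∈ Set.Icc a b, (T μ).IsHermitian)
    (hT'deriv : ∀ μ ∈ Set.Ioo a b, ∀ i j : Fin n,
      HasDerivAt (fun t : ℝ => T t i j) (T' μ i j) μ)
    (ρ : (Fin n → ℂ) → ℝ)
    (hρmem : ∀ x : Fin n → ℂ, x ≠ 0 → ρ x ∈ Set.Ioo a b)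
    (hρroot : ∀ x : Fin n → ℂ, x ≠ 0 → star x ⬝ᵥ (T (ρ x)) *ᵥ x = 0)
    (hρuniq : ∀ x : Fin n → ℂ, x ≠ 0 → ∀ μ ∈ Set.Ioo a b,
      star x ⬝ᵥ (T μ) *ᵥ x = 0 → μ = ρ x)
    (hderiv_neg : ∀ x : Fin n → ℂ, x ≠ 0 → (star x ⬝ᵥ (T' (ρ x)) *ᵥ x).re < 0) :
    ∀ x : Fin n → ℂ, x ≠ 0 → ∀ μ ∈ Set.Ioo a b, μ ≠ ρ x →
      (μ - ρ x) * (star x ⬝ᵥ (T μ) *ᵥ x).re < 0 := by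
  intro x hx μ hμ hne
  have hderiv : ∀ t ∈ Ioo a b,
      HasDerivAt (fun s => (star x ⬝ᵥ T s *ᵥ x).re) (star x ⬝ᵥ T' t *ᵥ x).re t := fun t ht =>
    Complex.reCLM.hasFDerivAt.comp_hasDerivAt t
      (hasDerivAt_star_dotProduct_mulVec (hT'deriv t ht) x)
  have hzero : ∀ t ∈ Ioo a b, (star x ⬝ᵥ T t *ᵥ x).re = 0 → t = ρ x := fun t ht h0 =>
    hρuniq x hx t ht <| Complex.ext h0 <|
      (hTherm t (Ioo_subset_Icc_self ht)).im_star_dotProduct_mulVec_self x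
  exact sub_mul_neg_of_hasDerivAt_neg_of_unique_zero
    (fun t ht => (hderiv t ht).continuousAt.continuousWithinAt) (hρmem x hx)
    (by simp [hρroot x hx]) (hderiv _ (hρmem x hx)) (hderiv_neg x hx) hzero hμ hne

/-- If `T a`, `T b` are invertible, `T` is continuously differentiable on
`(a,b)` with derivative `T'`, and `x* T'(ρ(x)) x < 0` for every nonzero `x`, then the
interval `(a,b)` is of negative type. -/
theorem interval_negative_type_of_deriv_neg
    (n : ℕ) (hn : 1 ≤ n) (a b : ℝ) (hab : a < b)
    (T T' : ℝ → Matrix (Fin n) (Fin n) ℂ)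
    (hTcont : ContinuousOn T (Set.Icc a b))
    (hTherm : ∀ μ ∈ Set.Icc a b, (T μ).IsHermitian)
    (hT'deriv : ∀ μ ∈ Set.Ioo a b, ∀ i j : Fin n,
      HasDerivAt (fun t : ℝ => T t i j) (T' μ i j) μ)
    (hT'cont : ContinuousOn T' (Set.Ioo a b))
    (ρ : (Fin n → ℂ) → ℝ)
    (hρcont : ContinuousOn ρ {x : Fin n → ℂ | x ≠ 0})
    (hρmem : ∀ x : Fin n → ℂ, x ≠ 0 → ρ x ∈ Set.Ioo a b)
    (hρroot : ∀ x : Fin n → ℂ, x ≠ 0 → star x ⬝ᵥ (T (ρ x)) *ᵥ x = 0)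
    (hρuniq : ∀ x : Fin n → ℂ, x ≠ 0 → ∀ μ ∈ Set.Ioo a b,
      star x ⬝ᵥ (T μ) *ᵥ x = 0 → μ = ρ x)
    (hTa : IsUnit (T a)) (hTb : IsUnit (T b))
    (hderiv_neg : ∀ x : Fin n → ℂ, x ≠ 0 → (star x ⬝ᵥ (T' (ρ x)) *ᵥ x).re < 0) :
    ∀ x : Fin n → ℂ, x ≠ 0 → ∀ μ ∈ Set.Ioo a b, μ ≠ ρ x →
      (μ - ρ x) * (star x ⬝ᵥ (T μ) *ᵥ x).re < 0 :=
  interval_negative_type_of_deriv_neg_general n a b T T' hTherm hT'deriv ρ hρmem hρroot hρuniq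
    hderiv_neg
end

section
/- Assume that neither a nor b is an eigenvalue of T(·) (T(a) and T(b) are invertible), that T is twice continuously differentiable on (a,b), and that x*T''(ρ(x))x ≠ 0 for every nonzero x ∈ ℂ^n. Then the interval J = (a,b) is of positive type if and only if x*T'(ρ(x))x > 0 for every nonzero x ∈ ℂ^n. -/
/-!
Along a fixed nonzero `x`, the scalar function `f μ = x* T(μ) x` vanishes in `(a, b)` exactly at
`r = ρ(x)`, and positive type says that `f` changes sign from negative to positive there. If
`f'(r) > 0`, the difference quotient `dslope f r` is continuous on `(a, b)`, positive at `r` and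
nowhere zero, hence positive everywhere, which is the sign change. Conversely a sign change forces
`f'(r) ≥ 0`, and `f'(r) = 0` is excluded because together with `f''(r) ≠ 0` the second derivative
test would make `r` a local extremum of `f`, where no sign change can happen.
-/

open Matrix Set Filter Topology

def PositiveTypeAt (f : ℝ → ℝ) (s : Set ℝ) (r : ℝ) : Prop :=
  ∀ μ ∈ s, μ ≠ r → 0 < (μ - r) * f μ

section PositiveTypeAt

variable {f f' : ℝ → ℝ} {s : Set ℝ} {r : ℝ}

theorem positiveTypeAt_of_deriv_pos (hs : IsPreconnected s) (hsr : s ∈ 𝓝 r)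
    (hf : ∀ μ ∈ s, HasDerivAt f (f' μ) μ) (hfr : f r = 0) (hzero : ∀ μ ∈ s, f μ = 0 → μ = r)
    (hpos : 0 < f' r) : PositiveTypeAt f s r := by
  have hr : r ∈ s := mem_of_mem_nhds hsr
  have hcont : ContinuousOn (dslope f r) s :=
    (continuousOn_dslope hsr).2
      ⟨fun μ hμ => (hf μ hμ).continuousAt.continuousWithinAt, (hf r hr).differentiableAt⟩
  have hdslope_same : dslope f r r = f' r := by rw [dslope_same, (hf r hr).deriv]
  have hdslope : ∀ μ, μ ≠ r → dslope f r μ = f μ / (μ - r) := fun μ hμ => by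
    rw [dslope_of_ne _ hμ, slope_def_field, hfr, sub_zero]
  have hne : ∀ μ ∈ s, dslope f r μ ≠ 0 := by
    intro μ hμ
    rcases eq_or_ne μ r with rfl | hμr
    · exact hdslope_same ▸ hpos.ne'
    · rw [hdslope μ hμr]
      exact div_ne_zero (fun h => hμr (hzero μ hμ h)) (sub_ne_zero.2 hμr)
  have hdslope_pos : ∀ μ ∈ s, 0 < dslope f r μ := by
    intro μ hμ
    by_contra! hle
    obtain ⟨ν, hν, hν0⟩ :=
      hs.intermediate_value hμ hr hcont ⟨hle, (hdslope_same ▸ hpos).le⟩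
    exact hne ν hν hν0
  intro μ hμ hμr
  have hsub : μ - r ≠ 0 := sub_ne_zero.2 hμr
  have hfμ : f μ = (μ - r) * dslope f r μ := by
    rw [hdslope μ hμr]; field_simp
  rw [hfμ, ← mul_assoc]
  exact mul_pos (mul_self_pos.2 hsub) (hdslope_pos μ hμ)

theorem PositiveTypeAt.hasDerivAt_nonneg {d : ℝ} (h : PositiveTypeAt f s r) (hsr : s ∈ 𝓝 r)
    (hfr : f r = 0) (hd : HasDerivAt f d r) : 0 ≤ d := by
  refine ge_of_tendsto hd.tendsto_slope ?_
  filter_upwards [mem_nhdsWithin_of_mem_nhds hsr, self_mem_nhdsWithin] with μ hμ (hμr : μ ≠ r)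
  have hsub : μ - r ≠ 0 := sub_ne_zero.2 hμr
  have hslope : slope f r μ = (μ - r) * f μ / (μ - r) ^ 2 := by
    rw [slope_def_field, hfr, sub_zero]; field_simp
  rw [hslope]
  exact div_nonneg (h μ hμ hμr).le (sq_nonneg _)

theorem PositiveTypeAt.not_isLocalExtr (h : PositiveTypeAt f s r) (hsr : s ∈ 𝓝 r)
    (hfr : f r = 0) : ¬IsLocalExtr f r := by
  have hs : ∀ᶠ μ in 𝓝 r, μ ∈ s := hsr
  rintro (hmin | hmax)
  · obtain ⟨μ, ⟨hμ, hle⟩, hμr : μ < r⟩ := ((hs.and hmin).filter_mono nhdsWithin_le_nhds |>.and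
      (self_mem_nhdsWithin : ∀ᶠ μ in 𝓝[<] r, μ ∈ Iio r)).exists
    nlinarith [h μ hμ hμr.ne, hfr ▸ hle]
  · obtain ⟨μ, ⟨hμ, hle⟩, hμr : r < μ⟩ := ((hs.and hmax).filter_mono nhdsWithin_le_nhds |>.and
      (self_mem_nhdsWithin : ∀ᶠ μ in 𝓝[>] r, μ ∈ Ioi r)).exists
    nlinarith [h μ hμ hμr.ne', hfr ▸ hle]

theorem isLocalExtr_of_deriv_eq_zero_of_deriv_deriv_ne_zero {f'' : ℝ}
    (hf : ∀ᶠ μ in 𝓝 r, HasDerivAt f (f' μ) μ) (hf' : HasDerivAt f' f'' r) (h0 : f' r = 0)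
    (h'' : f'' ≠ 0) : IsLocalExtr f r := by
  have hd : deriv f =ᶠ[𝓝 r] f' := hf.mono fun μ h => h.deriv
  have hd0 : deriv f r = 0 := hd.eq_of_nhds.trans h0
  have hd2 : deriv (deriv f) r = f'' := hd.deriv_eq.trans hf'.deriv
  have hc : ContinuousAt f r := hf.self_of_nhds.continuousAt
  rcases h''.lt_or_gt with hneg | hpos
  · exact (isLocalMax_of_deriv_deriv_neg (hd2 ▸ hneg) hd0 hc).isExtr
  · exact (isLocalMin_of_deriv_deriv_pos (hd2 ▸ hpos) hd0 hc).isExtr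

theorem PositiveTypeAt.deriv_pos {f'' : ℝ} (h : PositiveTypeAt f s r) (hsr : s ∈ 𝓝 r)
    (hfr : f r = 0) (hf : ∀ μ ∈ s, HasDerivAt f (f' μ) μ) (hf' : HasDerivAt f' f'' r)
    (h'' : f'' ≠ 0) : 0 < f' r := by
  refine (h.hasDerivAt_nonneg hsr hfr (hf r (mem_of_mem_nhds hsr))).lt_of_ne fun h0 => ?_
  exact h.not_isLocalExtr hsr hfr
    (isLocalExtr_of_deriv_eq_zero_of_deriv_deriv_ne_zero (eventually_of_mem hsr hf) hf' h0.symm h'')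

end PositiveTypeAt

section QuadraticForm

variable {m : Type*} [Fintype m]

theorem hasDerivAt_re_star_dotProduct_mulVec (x : m → ℂ) {A : ℝ → Matrix m m ℂ}
    {B : Matrix m m ℂ} {μ : ℝ} (h : ∀ i j, HasDerivAt (fun t => A t i j) (B i j) μ) :
    HasDerivAt (fun t => (star x ⬝ᵥ A t *ᵥ x).re) (star x ⬝ᵥ B *ᵥ x).re μ := by
  have hq : HasDerivAt (fun t => star x ⬝ᵥ A t *ᵥ x) (star x ⬝ᵥ B *ᵥ x) μ := by
    simp only [mulVec, dotProduct, Pi.star_apply]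
    exact HasDerivAt.fun_sum fun i _ =>
      (HasDerivAt.fun_sum fun j _ => (h i j).mul_const (x j)).const_mul _
  exact Complex.reCLM.hasFDerivAt.comp_hasDerivAt μ hq

theorem Matrix.IsHermitian.star_dotProduct_mulVec_eq_zero_iff {A : Matrix m m ℂ}
    (hA : A.IsHermitian) (x : m → ℂ) : star x ⬝ᵥ A *ᵥ x = 0 ↔ (star x ⬝ᵥ A *ᵥ x).re = 0 :=
  ⟨fun h => by rw [h, Complex.zero_re], fun h =>
    Complex.ext h (hA.im_star_dotProduct_mulVec_self x)⟩

end QuadraticForm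

theorem interval_positive_type_iff_deriv_pos_general
    (n : ℕ) (a b : ℝ)
    (T T' T'' : ℝ → Matrix (Fin n) (Fin n) ℂ)
    (hTherm : ∀ μ ∈ Set.Icc a b, (T μ).IsHermitian)
    (hT'deriv : ∀ μ ∈ Set.Ioo a b, ∀ i j : Fin n,
      HasDerivAt (fun t : ℝ => T t i j) (T' μ i j) μ)
    (hT''deriv : ∀ μ ∈ Set.Ioo a b, ∀ i j : Fin n,
      HasDerivAt (fun t : ℝ => T' t i j) (T'' μ i j) μ)
    (ρ : (Fin n → ℂ) → ℝ)
    (hρmem : ∀ x : Fin n → ℂ, x ≠ 0 → ρ x ∈ Set.Ioo a b)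
    (hρroot : ∀ x : Fin n → ℂ, x ≠ 0 → star x ⬝ᵥ (T (ρ x)) *ᵥ x = 0)
    (hρuniq : ∀ x : Fin n → ℂ, x ≠ 0 → ∀ μ ∈ Set.Ioo a b,
      star x ⬝ᵥ (T μ) *ᵥ x = 0 → μ = ρ x)
    (hT''ne : ∀ x : Fin n → ℂ, x ≠ 0 → (star x ⬝ᵥ (T'' (ρ x)) *ᵥ x).re ≠ 0) :
    (∀ x : Fin n → ℂ, x ≠ 0 → ∀ μ ∈ Set.Ioo a b, μ ≠ ρ x →
        0 < (μ - ρ x) * (star x ⬝ᵥ (T μ) *ᵥ x).re) ↔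
      (∀ x : Fin n → ℂ, x ≠ 0 → 0 < (star x ⬝ᵥ (T' (ρ x)) *ᵥ x).re) := by
  have hderiv (x : Fin n → ℂ) : ∀ μ ∈ Ioo a b,
      HasDerivAt (fun t => (star x ⬝ᵥ T t *ᵥ x).re) (star x ⬝ᵥ T' μ *ᵥ x).re μ :=
    fun μ hμ => hasDerivAt_re_star_dotProduct_mulVec x (hT'deriv μ hμ)
  have hroot (x : Fin n → ℂ) (hx : x ≠ 0) : (star x ⬝ᵥ T (ρ x) *ᵥ x).re = 0 := by
    rw [hρroot x hx, Complex.zero_re]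
  have hnhds (x : Fin n → ℂ) (hx : x ≠ 0) : Ioo a b ∈ 𝓝 (ρ x) :=
    Ioo_mem_nhds (hρmem x hx).1 (hρmem x hx).2
  refine ⟨fun hpos x hx => ?_, fun hpos x hx => ?_⟩
  · exact PositiveTypeAt.deriv_pos (hpos x hx) (hnhds x hx) (hroot x hx) (hderiv x)
      (hasDerivAt_re_star_dotProduct_mulVec x (hT''deriv _ (hρmem x hx))) (hT''ne x hx)
  · refine positiveTypeAt_of_deriv_pos isPreconnected_Ioo (hnhds x hx) (hderiv x) (hroot x hx)
      (fun μ hμ h0 => hρuniq x hx μ hμ ?_) (hpos x hx)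
    exact ((hTherm μ (Ioo_subset_Icc_self hμ)).star_dotProduct_mulVec_eq_zero_iff x).2 h0

/-- If `T a`, `T b` are invertible, `T` is twice continuously
differentiable on `(a,b)` with derivatives `T'` and `T''`, and
`x* T''(ρ(x)) x ≠ 0` for every nonzero `x`, then the interval `(a,b)` is of
positive type if and only if `x* T'(ρ(x)) x > 0` for every nonzero `x`. -/
theorem interval_positive_type_iff_deriv_pos
    (n : ℕ) (hn : 1 ≤ n) (a b : ℝ) (hab : a < b)
    (T T' T'' : ℝ → Matrix (Fin n) (Fin n) ℂ)
    (hTcont : ContinuousOn T (Set.Icc a b))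
    (hTherm : ∀ μ ∈ Set.Icc a b, (T μ).IsHermitian)
    (hT'deriv : ∀ μ ∈ Set.Ioo a b, ∀ i j : Fin n,
      HasDerivAt (fun t : ℝ => T t i j) (T' μ i j) μ)
    (hT'cont : ContinuousOn T' (Set.Ioo a b))
    (hT''deriv : ∀ μ ∈ Set.Ioo a b, ∀ i j : Fin n,
      HasDerivAt (fun t : ℝ => T' t i j) (T'' μ i j) μ)
    (hT''cont : ContinuousOn T'' (Set.Ioo a b))
    (ρ : (Fin n → ℂ) → ℝ)
    (hρcont : ContinuousOn ρ {x : Fin n → ℂ | x ≠ 0})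
    (hρmem : ∀ x : Fin n → ℂ, x ≠ 0 → ρ x ∈ Set.Ioo a b)
    (hρroot : ∀ x : Fin n → ℂ, x ≠ 0 → star x ⬝ᵥ (T (ρ x)) *ᵥ x = 0)
    (hρuniq : ∀ x : Fin n → ℂ, x ≠ 0 → ∀ μ ∈ Set.Ioo a b,
      star x ⬝ᵥ (T μ) *ᵥ x = 0 → μ = ρ x)
    (hTa : IsUnit (T a)) (hTb : IsUnit (T b))
    (hT''ne : ∀ x : Fin n → ℂ, x ≠ 0 → (star x ⬝ᵥ (T'' (ρ x)) *ᵥ x).re ≠ 0) :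
    (∀ x : Fin n → ℂ, x ≠ 0 → ∀ μ ∈ Set.Ioo a b, μ ≠ ρ x →
        0 < (μ - ρ x) * (star x ⬝ᵥ (T μ) *ᵥ x).re) ↔
      (∀ x : Fin n → ℂ, x ≠ 0 → 0 < (star x ⬝ᵥ (T' (ρ x)) *ᵥ x).re) :=
  interval_positive_type_iff_deriv_pos_general n a b T T' T'' hTherm hT'deriv hT''deriv ρ hρmem
    hρroot hρuniq hT''ne
end

section
/- Assume the interval J = (a,b) is of positive type and T is continuously differentiable on (a,b). Then for every k ∈ {1,…,n} there exists λ_k ∈ (a,b) that is the k-th eigenvalue of T(·) (zero is the k-th largest eigenvalue, counted with multiplicity, of the Hermitian matrix T(λ_k)), and λ_k satisfies the min-max characterizations: λ_k equals the minimum over all ℂ-subspaces S ⊆ ℂ^n with dim S = k of the maximum of ρ(x) over nonzero x ∈ S, and λ_k also equals the maximum over all ℂ-subspaces S ⊆ ℂ^n with dim S = n−k+1 of the minimum of ρ(x) over nonzero x ∈ S (all the indicated extrema are attained). -/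
/-!
Let `λ` be the infimum, over `(k+1)`-dimensional subspaces `S`, of `max_{S∖0} ρ`. These maxima
exist because `ρ` is continuous and constant on complex lines, so only its values on the compact
unit sphere of `S` matter. Positive type says that `ρ x ≤ μ` exactly when `x* T(μ) x ≥ 0`.

Let `V₁` and `V₂` be spanned by eigenvectors of `T(λ)` for its `k+1` largest and its `n-k`
smallest eigenvalues, so that `x* T(λ) x` is `≥ μₖ ‖x‖²` on `V₁` and `≤ μₖ ‖x‖²` on `V₂`.
If `μₖ > 0`, then `ρ < λ` on `V₁`, so `V₁` beats the infimum. If `μₖ < 0`, then `ρ > λ` on `V₂`,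
which meets every `(k+1)`-dimensional subspace, so the infimum exceeds `λ`. Hence `μₖ = 0`, and
then `ρ ≤ λ` on `V₁` and `ρ ≥ λ` on `V₂`. A vector in `V₁ ∩ V₂` has `ρ = λ`. A dimension count
(every `(k+1)`-dimensional subspace meets `V₂`, and every `(n-k)`-dimensional one meets `V₁`)
gives both characterizations.
-/

open Matrix Set
open scoped ComplexOrder

/-- `0` is the `k`-th largest eigenvalue (counted with multiplicity, `k` zero-based)
of the matrix `A`: the eigenvalues of `A` can be listed in decreasing order with
multiplicity (as the roots of the characteristic polynomial) so that the `k`-th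
entry is `0`. -/
def ZeroIsKthLargestEigenvalue {m : ℕ} (A : Matrix (Fin m) (Fin m) ℂ) (k : Fin m) : Prop :=
  ∃ μ : Fin m → ℝ, Antitone μ ∧
    A.charpoly = ∏ i : Fin m, (Polynomial.X - Polynomial.C ((μ i : ℂ))) ∧ μ k = 0

open Module
open scoped InnerProductSpace

namespace OrthonormalBasis

variable {ι 𝕜 E : Type*} [Fintype ι] [RCLike 𝕜] [NormedAddCommGroup E] [InnerProductSpace 𝕜 E]
  (b : OrthonormalBasis ι 𝕜 E) {T : E →ₗ[𝕜] E} {μ : ι → ℝ}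

theorem inner_eq_zero_of_mem_span_image {s : Set ι} {x : E} (hx : x ∈ Submodule.span 𝕜 (b '' s))
    {i : ι} (hi : i ∉ s) : ⟪b i, x⟫_𝕜 = 0 := by
  rw [← b.coe_toBasis, Module.Basis.mem_span_image] at hx
  rw [← b.repr_apply_apply, ← b.coe_toBasis_repr_apply]
  exact Finsupp.notMem_support_iff.mp fun h => hi (hx h)

theorem re_inner_map_self_eq_sum (hT : ∀ i, T (b i) = (μ i : 𝕜) • b i) (x : E) :
    RCLike.re ⟪x, T x⟫_𝕜 = ∑ i, μ i * ‖⟪b i, x⟫_𝕜‖ ^ 2 := by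
  have hTx : T x = ∑ i, ((μ i : 𝕜) * ⟪b i, x⟫_𝕜) • b i := by
    conv_lhs => rw [← b.sum_repr' x]
    simp only [map_sum, map_smul, hT, smul_smul, mul_comm]
  rw [hTx, inner_sum, map_sum]
  refine Finset.sum_congr rfl fun i _ => ?_
  rw [inner_smul_right, ← inner_conj_symm x (b i), mul_assoc, RCLike.mul_conj]
  norm_cast

theorem mul_norm_sq_le_re_inner_map_self (hT : ∀ i, T (b i) = (μ i : 𝕜) • b i) {s : Set ι}
    {c : ℝ} (hc : ∀ i ∈ s, c ≤ μ i) {x : E} (hx : x ∈ Submodule.span 𝕜 (b '' s)) :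
    c * ‖x‖ ^ 2 ≤ RCLike.re ⟪x, T x⟫_𝕜 := by
  rw [b.re_inner_map_self_eq_sum hT, ← b.sum_sq_norm_inner_right, Finset.mul_sum]
  refine Finset.sum_le_sum fun i _ => ?_
  by_cases hi : i ∈ s
  · exact mul_le_mul_of_nonneg_right (hc i hi) (by positivity)
  · simp [b.inner_eq_zero_of_mem_span_image hx hi]

theorem re_inner_map_self_le_mul_norm_sq (hT : ∀ i, T (b i) = (μ i : 𝕜) • b i) {s : Set ι}
    {c : ℝ} (hc : ∀ i ∈ s, μ i ≤ c) {x : E} (hx : x ∈ Submodule.span 𝕜 (b '' s)) :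
    RCLike.re ⟪x, T x⟫_𝕜 ≤ c * ‖x‖ ^ 2 := by
  have := b.mul_norm_sq_le_re_inner_map_self (T := -T) (μ := -μ) (fun i => by simp [hT])
    (fun i hi => neg_le_neg (hc i hi)) hx
  simpa [inner_neg_right] using this

end OrthonormalBasis

theorem Matrix.star_dotProduct_mulVec_eq_inner {𝕜 ι : Type*} [RCLike 𝕜] [Fintype ι]
    [DecidableEq ι] (A : Matrix ι ι 𝕜) (x : ι → 𝕜) :
    star x ⬝ᵥ A *ᵥ x = ⟪WithLp.toLp 2 x, A.toEuclideanLin (WithLp.toLp 2 x)⟫_𝕜 := by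
  rw [Matrix.toLpLin_toLp, EuclideanSpace.inner_toLp_toLp, dotProduct_comm]
  rfl

open Polynomial in
theorem Matrix.IsHermitian.exists_antitone_eigenvalues_subspaces {n : ℕ}
    {A : Matrix (Fin n) (Fin n) ℂ} (hA : A.IsHermitian) (k : Fin n) :
    ∃ μ : Fin n → ℝ, Antitone μ ∧ A.charpoly = ∏ i, (X - C (μ i : ℂ)) ∧
      ∃ V₁ V₂ : Submodule ℂ (Fin n → ℂ),
        finrank ℂ V₁ = k + 1 ∧ finrank ℂ V₂ = n - k ∧
        (∀ x ∈ V₁, μ k * ‖(WithLp.toLp 2 x : EuclideanSpace ℂ (Fin n))‖ ^ 2 ≤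
          (star x ⬝ᵥ A *ᵥ x).re) ∧
        (∀ x ∈ V₂, (star x ⬝ᵥ A *ᵥ x).re ≤
          μ k * ‖(WithLp.toLp 2 x : EuclideanSpace ℂ (Fin n))‖ ^ 2) := by
  have hA' := isSymmetric_toEuclideanLin_iff.mpr hA
  have hn : finrank ℂ (EuclideanSpace ℂ (Fin n)) = n := finrank_euclideanSpace_fin
  set μ := hA'.eigenvalues hn
  set b := hA'.eigenvectorBasis hn
  have hb : ∀ i, A.toEuclideanLin (b i) = (μ i : ℂ) • b i := hA'.apply_eigenvectorBasis hn
  let e : EuclideanSpace ℂ (Fin n) ≃ₗ[ℂ] (Fin n → ℂ) := WithLp.linearEquiv 2 ℂ (Fin n → ℂ)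
  let eigenspan (s : Finset (Fin n)) : Submodule ℂ (Fin n → ℂ) :=
    (Submodule.span ℂ (b '' s)).map e.toLinearMap
  have finrank_eigenspan (s : Finset (Fin n)) : finrank ℂ (eigenspan s) = s.card := by
    rw [LinearEquiv.finrank_map_eq, Set.image_eq_range]
    exact (finrank_span_eq_card
      (b.orthonormal.linearIndependent.comp _ Subtype.val_injective)).trans (Fintype.card_coe s)
  refine ⟨μ, hA'.eigenvalues_antitone hn, ?_, eigenspan (Finset.Iic k), eigenspan (Finset.Ici k),
    by rw [finrank_eigenspan, Fin.card_Iic], by rw [finrank_eigenspan, Fin.card_Ici],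
    fun x hx => ?_, fun x hx => ?_⟩
  · exact (charpoly_toLin A (PiLp.basisFun 2 ℂ (Fin n))).symm.trans (hA'.charpoly_eq hn)
  · rw [star_dotProduct_mulVec_eq_inner]
    refine b.mul_norm_sq_le_re_inner_map_self hb (fun i hi => hA'.eigenvalues_antitone hn ?_)
      ((Submodule.mem_map_equiv _).mp hx)
    simpa using hi
  · rw [star_dotProduct_mulVec_eq_inner]
    refine b.re_inner_map_self_le_mul_norm_sq hb (fun i hi => hA'.eigenvalues_antitone hn ?_)
      ((Submodule.mem_map_equiv _).mp hx)
    simpa using hi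

theorem Submodule.exists_mem_inf_ne_zero_of_finrank_lt {K V : Type*} [DivisionRing K]
    [AddCommGroup V] [Module K V] [FiniteDimensional K V] {S W : Submodule K V}
    (h : finrank K V < finrank K S + finrank K W) :
    ∃ x ∈ S ⊓ W, x ≠ 0 := by
  refine Submodule.exists_mem_ne_zero_of_ne_bot fun hbot => ?_
  have := Submodule.finrank_sup_add_finrank_inf_eq S W
  rw [hbot, finrank_bot] at this
  have := (S ⊔ W).finrank_le
  omega

theorem Submodule.exists_finrank_eq {K V : Type*} [DivisionRing K] [AddCommGroup V]
    [Module K V] [FiniteDimensional K V] {d : ℕ} (hd : d ≤ finrank K V) :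
    ∃ S : Submodule K V, finrank K S = d := by
  let b := Module.finBasis K V
  refine ⟨Submodule.span K (Set.range (b ∘ Fin.castLE hd)), ?_⟩
  rw [finrank_span_eq_card (b.linearIndependent.comp _ (Fin.castLE_injective hd)),
    Fintype.card_fin]

theorem isCompact_image_punctured_submodule {𝕜 E : Type*} [RCLike 𝕜] [NormedAddCommGroup E]
    [NormedSpace 𝕜 E] [FiniteDimensional 𝕜 E] {ρ : E → ℝ} (hρ : ContinuousOn ρ {x | x ≠ 0})
    (hsmul : ∀ (c : 𝕜) (x : E), c ≠ 0 → ρ (c • x) = ρ x) (S : Submodule 𝕜 E) :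
    IsCompact (ρ '' {x | x ∈ S ∧ x ≠ 0}) := by
  have : ProperSpace E := FiniteDimensional.proper 𝕜 E
  have hsphere : ρ '' {x | x ∈ S ∧ x ≠ 0} = ρ '' (S ∩ Metric.sphere 0 1) := by
    refine Subset.antisymm ?_ (image_mono fun x hx => ⟨hx.1, ne_zero_of_mem_unit_sphere ⟨x, hx.2⟩⟩)
    rintro _ ⟨x, ⟨hx, hx0⟩, rfl⟩
    exact ⟨(‖x‖⁻¹ : 𝕜) • x, ⟨S.smul_mem _ hx, by simp [norm_smul_inv_norm hx0]⟩,
      hsmul _ _ (by simpa using hx0)⟩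
  rw [hsphere]
  exact ((isCompact_sphere 0 1).inter_left S.closed_of_finiteDimensional).image_of_continuousOn
    (hρ.mono fun x hx => ne_zero_of_mem_unit_sphere ⟨x, hx.2⟩)

section SubspaceExtrema

variable (K : Type*) {V : Type*} [Field K] [AddCommGroup V] [Module K V]

def subspaceMaxima (ρ : V → ℝ) (d : ℕ) : Set ℝ :=
  {r | ∃ S : Submodule K V, finrank K S = d ∧ IsGreatest (ρ '' {x | x ∈ S ∧ x ≠ 0}) r}

def subspaceMinima (ρ : V → ℝ) (d : ℕ) : Set ℝ :=
  {r | ∃ S : Submodule K V, finrank K S = d ∧ IsLeast (ρ '' {x | x ∈ S ∧ x ≠ 0}) r}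

variable {K} {ρ : V → ℝ} {d : ℕ} {r lam : ℝ}

theorem subspaceMaxima_subset_image :
    subspaceMaxima K ρ d ⊆ ρ '' {x | x ∈ (⊤ : Submodule K V) ∧ x ≠ 0} := by
  rintro _ ⟨S, -, ⟨x, ⟨-, hx0⟩, rfl⟩, -⟩
  exact ⟨x, ⟨trivial, hx0⟩, rfl⟩

theorem exists_mem_subspaceMaxima (hK : ∀ S : Submodule K V, IsCompact (ρ '' {x | x ∈ S ∧ x ≠ 0}))
    {S : Submodule K V} (hS : finrank K S = d) (hS0 : S ≠ ⊥) :
    ∃ x ∈ S, x ≠ 0 ∧ ρ x ∈ subspaceMaxima K ρ d := by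
  obtain ⟨x, hx, hx0⟩ := Submodule.exists_mem_ne_zero_of_ne_bot hS0
  obtain ⟨_, ⟨y, ⟨hy, hy0⟩, rfl⟩, hmax⟩ := (hK S).exists_isGreatest ⟨ρ x, x, ⟨hx, hx0⟩, rfl⟩
  exact ⟨y, hy, hy0, S, hS, ⟨y, ⟨hy, hy0⟩, rfl⟩, hmax⟩

theorem exists_sInf_subspaceMaxima_le
    (hK : ∀ S : Submodule K V, IsCompact (ρ '' {x | x ∈ S ∧ x ≠ 0})) {V₁ : Submodule K V}
    (h₁ : finrank K V₁ = d) (hV₁ : V₁ ≠ ⊥) :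
    ∃ x ∈ V₁, x ≠ 0 ∧ sInf (subspaceMaxima K ρ d) ≤ ρ x := by
  obtain ⟨x, hx, hx0, hxP⟩ := exists_mem_subspaceMaxima hK h₁ hV₁
  exact ⟨x, hx, hx0, csInf_le ((hK ⊤).bddBelow.mono subspaceMaxima_subset_image) hxP⟩

theorem sInf_subspaceMaxima_mem_Ioo
    (hK : ∀ S : Submodule K V, IsCompact (ρ '' {x | x ∈ S ∧ x ≠ 0})) {a b : ℝ}
    (hρ : ∀ x, x ≠ 0 → ρ x ∈ Ioo a b) (hne : (subspaceMaxima K ρ d).Nonempty) :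
    sInf (subspaceMaxima K ρ d) ∈ Ioo a b := by
  obtain ⟨_, hr⟩ := hne
  obtain ⟨x, ⟨-, hx0⟩, rfl⟩ := subspaceMaxima_subset_image hr
  obtain ⟨_, ⟨y, ⟨-, hy0⟩, rfl⟩, hmin⟩ := (hK ⊤).exists_isLeast ⟨ρ x, x, ⟨trivial, hx0⟩, rfl⟩
  constructor
  · calc a < ρ y := (hρ y hy0).1
      _ ≤ _ := le_csInf ⟨_, hr⟩ fun r hr => hmin (subspaceMaxima_subset_image hr)
  · calc _ ≤ ρ x := csInf_le ((hK ⊤).bddBelow.mono subspaceMaxima_subset_image) hr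
      _ < b := (hρ x hx0).2

variable [FiniteDimensional K V]

theorem exists_le_of_mem_subspaceMaxima (hr : r ∈ subspaceMaxima K ρ d) {W : Submodule K V}
    (hW : finrank K V < d + finrank K W) : ∃ y ∈ W, y ≠ 0 ∧ ρ y ≤ r := by
  obtain ⟨S, rfl, -, hS⟩ := hr
  obtain ⟨y, ⟨hyS, hyW⟩, hy0⟩ := Submodule.exists_mem_inf_ne_zero_of_finrank_lt hW
  exact ⟨y, hyW, hy0, hS ⟨y, ⟨hyS, hy0⟩, rfl⟩⟩

theorem exists_ge_of_mem_subspaceMinima (hr : r ∈ subspaceMinima K ρ d) {W : Submodule K V}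
    (hW : finrank K V < d + finrank K W) : ∃ y ∈ W, y ≠ 0 ∧ r ≤ ρ y := by
  obtain ⟨S, rfl, -, hS⟩ := hr
  obtain ⟨y, ⟨hyS, hyW⟩, hy0⟩ := Submodule.exists_mem_inf_ne_zero_of_finrank_lt hW
  exact ⟨y, hyW, hy0, hS ⟨y, ⟨hyS, hy0⟩, rfl⟩⟩

theorem isLeast_subspaceMaxima {V₁ V₂ : Submodule K V} (h₁ : finrank K V₁ = d)
    (h₂ : finrank K V < d + finrank K V₂) (hV₁ : ∀ x ∈ V₁, x ≠ 0 → ρ x ≤ lam)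
    (hV₂ : ∀ x ∈ V₂, x ≠ 0 → lam ≤ ρ x) {w : V} (hw : w ∈ V₁) (hw0 : w ≠ 0) (hρw : ρ w = lam) :
    IsLeast (subspaceMaxima K ρ d) lam := by
  refine ⟨⟨V₁, h₁, ⟨w, ⟨hw, hw0⟩, hρw⟩, ?_⟩, fun r hr => ?_⟩
  · rintro _ ⟨x, ⟨hx, hx0⟩, rfl⟩
    exact hV₁ x hx hx0
  · obtain ⟨y, hy, hy0, hyr⟩ := exists_le_of_mem_subspaceMaxima hr h₂
    exact (hV₂ y hy hy0).trans hyr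

theorem isGreatest_subspaceMinima {V₁ V₂ : Submodule K V} (h₁ : finrank K V₁ = d)
    (h₂ : finrank K V < d + finrank K V₂) (hV₁ : ∀ x ∈ V₁, x ≠ 0 → lam ≤ ρ x)
    (hV₂ : ∀ x ∈ V₂, x ≠ 0 → ρ x ≤ lam) {w : V} (hw : w ∈ V₁) (hw0 : w ≠ 0) (hρw : ρ w = lam) :
    IsGreatest (subspaceMinima K ρ d) lam := by
  refine ⟨⟨V₁, h₁, ⟨w, ⟨hw, hw0⟩, hρw⟩, ?_⟩, fun r hr => ?_⟩
  · rintro _ ⟨x, ⟨hx, hx0⟩, rfl⟩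
    exact hV₁ x hx hx0
  · obtain ⟨y, hy, hy0, hyr⟩ := exists_ge_of_mem_subspaceMinima hr h₂
    exact hyr.trans (hV₂ y hy hy0)

theorem subspaceMaxima_nonempty
    (hK : ∀ S : Submodule K V, IsCompact (ρ '' {x | x ∈ S ∧ x ≠ 0})) (hd : 1 ≤ d)
    (hdV : d ≤ finrank K V) : (subspaceMaxima K ρ d).Nonempty := by
  obtain ⟨S, hS⟩ := Submodule.exists_finrank_eq hdV
  obtain ⟨x, -, -, hx⟩ :=
    exists_mem_subspaceMaxima hK hS (Submodule.one_le_finrank_iff.mp (hS ▸ hd))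
  exact ⟨ρ x, hx⟩

theorem exists_le_sInf_subspaceMaxima
    (hK : ∀ S : Submodule K V, IsCompact (ρ '' {x | x ∈ S ∧ x ≠ 0}))
    (hne : (subspaceMaxima K ρ d).Nonempty) {V₂ : Submodule K V}
    (h₂ : finrank K V < d + finrank K V₂) (hV₂ : V₂ ≠ ⊥) :
    ∃ y ∈ V₂, y ≠ 0 ∧ ρ y ≤ sInf (subspaceMaxima K ρ d) := by
  obtain ⟨x, hx, hx0⟩ := Submodule.exists_mem_ne_zero_of_ne_bot hV₂
  obtain ⟨_, ⟨y, ⟨hy, hy0⟩, rfl⟩, hmin⟩ := (hK V₂).exists_isLeast ⟨ρ x, x, ⟨hx, hx0⟩, rfl⟩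
  refine ⟨y, hy, hy0, le_csInf hne fun r hr => ?_⟩
  obtain ⟨z, hz, hz0, hzr⟩ := exists_le_of_mem_subspaceMaxima hr h₂
  exact (hmin ⟨z, ⟨hz, hz0⟩, rfl⟩).trans hzr

end SubspaceExtrema

theorem le_iff_nonneg_of_forall_pos_mul_sub {s : Set ℝ} {f : ℝ → ℝ} {r t : ℝ} (hr : f r = 0)
    (hf : ∀ t ∈ s, t ≠ r → 0 < (t - r) * f t) (ht : t ∈ s) : r ≤ t ↔ 0 ≤ f t := by
  refine ⟨fun hrt => ?_, fun h => not_lt.1 fun htr => ?_⟩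
  · rcases hrt.eq_or_lt with rfl | hrt
    · exact hr.ge
    · exact (pos_of_mul_pos_right (hf t ht hrt.ne') (sub_nonneg.2 hrt.le)).le
  · have := hf t ht htr.ne
    nlinarith

theorem lt_iff_pos_of_forall_pos_mul_sub {s : Set ℝ} {f : ℝ → ℝ} {r t : ℝ} (hr : f r = 0)
    (hf : ∀ t ∈ s, t ≠ r → 0 < (t - r) * f t) (ht : t ∈ s) : r < t ↔ 0 < f t := by
  refine ⟨fun hrt => pos_of_mul_pos_right (hf t ht hrt.ne') (sub_nonneg.2 hrt.le),
    fun h => lt_of_le_of_ne ((le_iff_nonneg_of_forall_pos_mul_sub hr hf ht).2 h.le) ?_⟩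
  rintro rfl
  exact h.ne' hr

section RayleighFunctional

variable {n : ℕ} {a b : ℝ} {T : ℝ → Matrix (Fin n) (Fin n) ℂ} {ρ : (Fin n → ℂ) → ℝ}

theorem rayleigh_le_iff (hρroot : ∀ x : Fin n → ℂ, x ≠ 0 → star x ⬝ᵥ (T (ρ x)) *ᵥ x = 0)
    (hpos : ∀ x : Fin n → ℂ, x ≠ 0 → ∀ μ ∈ Set.Ioo a b, μ ≠ ρ x →
      0 < (μ - ρ x) * (star x ⬝ᵥ (T μ) *ᵥ x).re)
    {x : Fin n → ℂ} (hx : x ≠ 0) {μ : ℝ} (hμ : μ ∈ Ioo a b) :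
    ρ x ≤ μ ↔ 0 ≤ (star x ⬝ᵥ T μ *ᵥ x).re :=
  le_iff_nonneg_of_forall_pos_mul_sub (f := fun μ => (star x ⬝ᵥ T μ *ᵥ x).re)
    (by simp [hρroot x hx]) (hpos x hx) hμ

theorem rayleigh_lt_iff (hρroot : ∀ x : Fin n → ℂ, x ≠ 0 → star x ⬝ᵥ (T (ρ x)) *ᵥ x = 0)
    (hpos : ∀ x : Fin n → ℂ, x ≠ 0 → ∀ μ ∈ Set.Ioo a b, μ ≠ ρ x →
      0 < (μ - ρ x) * (star x ⬝ᵥ (T μ) *ᵥ x).re)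
    {x : Fin n → ℂ} (hx : x ≠ 0) {μ : ℝ} (hμ : μ ∈ Ioo a b) :
    ρ x < μ ↔ 0 < (star x ⬝ᵥ T μ *ᵥ x).re :=
  lt_iff_pos_of_forall_pos_mul_sub (f := fun μ => (star x ⬝ᵥ T μ *ᵥ x).re)
    (by simp [hρroot x hx]) (hpos x hx) hμ

theorem rayleigh_smul (hρmem : ∀ x : Fin n → ℂ, x ≠ 0 → ρ x ∈ Set.Ioo a b)
    (hρroot : ∀ x : Fin n → ℂ, x ≠ 0 → star x ⬝ᵥ (T (ρ x)) *ᵥ x = 0)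
    (hpos : ∀ x : Fin n → ℂ, x ≠ 0 → ∀ μ ∈ Set.Ioo a b, μ ≠ ρ x →
      0 < (μ - ρ x) * (star x ⬝ᵥ (T μ) *ᵥ x).re)
    (c : ℂ) (x : Fin n → ℂ) (hc : c ≠ 0) : ρ (c • x) = ρ x := by
  rcases eq_or_ne x 0 with rfl | hx
  · rw [smul_zero]
  have hcx : c • x ≠ 0 := smul_ne_zero hc hx
  have hq : star (c • x) ⬝ᵥ T (ρ x) *ᵥ (c • x) = 0 := by
    rw [mulVec_smul, star_smul, smul_dotProduct, dotProduct_smul, hρroot x hx, smul_zero, smul_zero]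
  refine le_antisymm ?_ (not_lt.1 fun h => ?_)
  · exact (rayleigh_le_iff hρroot hpos hcx (hρmem x hx)).2 (by rw [hq, Complex.zero_re])
  · have := (rayleigh_lt_iff hρroot hpos hcx (hρmem x hx)).1 h
    rw [hq, Complex.zero_re] at this
    exact this.false

theorem eq_zero_of_bounds_at_sInf_subspaceMaxima
    (hρroot : ∀ x : Fin n → ℂ, x ≠ 0 → star x ⬝ᵥ (T (ρ x)) *ᵥ x = 0)
    (hpos : ∀ x : Fin n → ℂ, x ≠ 0 → ∀ μ ∈ Set.Ioo a b, μ ≠ ρ x →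
      0 < (μ - ρ x) * (star x ⬝ᵥ (T μ) *ᵥ x).re)
    (hK : ∀ S : Submodule ℂ (Fin n → ℂ), IsCompact (ρ '' {x | x ∈ S ∧ x ≠ 0})) {d : ℕ}
    (hne : (subspaceMaxima ℂ ρ d).Nonempty) (hlam : sInf (subspaceMaxima ℂ ρ d) ∈ Ioo a b)
    {c : ℝ} {V₁ V₂ : Submodule ℂ (Fin n → ℂ)} (h₁ : finrank ℂ V₁ = d) (hV₁0 : V₁ ≠ ⊥)
    (h₂ : n < d + finrank ℂ V₂) (hV₂0 : V₂ ≠ ⊥)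
    (hV₁ : ∀ x ∈ V₁, c * ‖(WithLp.toLp 2 x : EuclideanSpace ℂ (Fin n))‖ ^ 2 ≤
      (star x ⬝ᵥ T (sInf (subspaceMaxima ℂ ρ d)) *ᵥ x).re)
    (hV₂ : ∀ x ∈ V₂, (star x ⬝ᵥ T (sInf (subspaceMaxima ℂ ρ d)) *ᵥ x).re ≤
      c * ‖(WithLp.toLp 2 x : EuclideanSpace ℂ (Fin n))‖ ^ 2) :
    c = 0 := by
  have hnorm {x : Fin n → ℂ} (hx : x ≠ 0) :
      0 < ‖(WithLp.toLp 2 x : EuclideanSpace ℂ (Fin n))‖ ^ 2 :=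
    pow_pos (norm_pos_iff.2 (by simpa using hx)) 2
  refine le_antisymm (not_lt.1 fun hc => ?_) (not_lt.1 fun hc => ?_)
  · obtain ⟨x, hx, hx0, hle⟩ := exists_sInf_subspaceMaxima_le hK h₁ hV₁0
    exact hle.not_gt ((rayleigh_lt_iff hρroot hpos hx0 hlam).2
      ((mul_pos hc (hnorm hx0)).trans_le (hV₁ x hx)))
  · obtain ⟨y, hy, hy0, hle⟩ :=
      exists_le_sInf_subspaceMaxima hK hne (by rwa [finrank_fin_fun]) hV₂0
    exact ((rayleigh_le_iff hρroot hpos hy0 hlam).1 hle).not_gt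
      ((hV₂ y hy).trans_lt (mul_neg_of_neg_of_pos hc (hnorm hy0)))

end RayleighFunctional

theorem nonlinear_variational_principle_positive_type_general
    (n : ℕ) (a b : ℝ)
    (T : ℝ → Matrix (Fin n) (Fin n) ℂ)
    (hTherm : ∀ μ ∈ Set.Icc a b, (T μ).IsHermitian)
    (ρ : (Fin n → ℂ) → ℝ)
    (hρcont : ContinuousOn ρ {x : Fin n → ℂ | x ≠ 0})
    (hρmem : ∀ x : Fin n → ℂ, x ≠ 0 → ρ x ∈ Set.Ioo a b)
    (hρroot : ∀ x : Fin n → ℂ, x ≠ 0 → star x ⬝ᵥ (T (ρ x)) *ᵥ x = 0)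
    (hpos : ∀ x : Fin n → ℂ, x ≠ 0 → ∀ μ ∈ Set.Ioo a b, μ ≠ ρ x →
      0 < (μ - ρ x) * (star x ⬝ᵥ (T μ) *ᵥ x).re) :
    ∀ k : Fin n, ∃ lam ∈ Set.Ioo a b,
      ZeroIsKthLargestEigenvalue (T lam) k ∧
      IsLeast {r : ℝ | ∃ S : Submodule ℂ (Fin n → ℂ), Module.finrank ℂ S = (k : ℕ) + 1 ∧
        IsGreatest (ρ '' {x : Fin n → ℂ | x ∈ S ∧ x ≠ 0}) r} lam ∧
      IsGreatest {r : ℝ | ∃ S : Submodule ℂ (Fin n → ℂ), Module.finrank ℂ S = n - (k : ℕ) ∧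
        IsLeast (ρ '' {x : Fin n → ℂ | x ∈ S ∧ x ≠ 0}) r} lam := by
  intro k
  have hK := isCompact_image_punctured_submodule hρcont (rayleigh_smul hρmem hρroot hpos)
  have hdim : Module.finrank ℂ (Fin n → ℂ) = n := Module.finrank_fin_fun ℂ
  have hne := subspaceMaxima_nonempty (d := k + 1) hK (by omega) (by omega)
  set lam := sInf (subspaceMaxima ℂ ρ (k + 1))
  have hlam : lam ∈ Ioo a b := sInf_subspaceMaxima_mem_Ioo hK hρmem hne
  obtain ⟨μ, hμ, hchar, V₁, V₂, h₁, h₂, hV₁, hV₂⟩ :=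
    (hTherm lam (Ioo_subset_Icc_self hlam)).exists_antitone_eigenvalues_subspaces k
  obtain ⟨w, ⟨hw₁, hw₂⟩, hw0⟩ :=
    Submodule.exists_mem_inf_ne_zero_of_finrank_lt (S := V₁) (W := V₂) (by omega)
  have hμk : μ k = 0 := eq_zero_of_bounds_at_sInf_subspaceMaxima hρroot hpos hK hne hlam h₁
    (Submodule.ne_bot_iff _ |>.2 ⟨w, hw₁, hw0⟩) (by omega)
    (Submodule.ne_bot_iff _ |>.2 ⟨w, hw₂, hw0⟩) hV₁ hV₂
  have hρV₁ (x) (hx : x ∈ V₁) (hx0 : x ≠ 0) : ρ x ≤ lam :=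
    (rayleigh_le_iff hρroot hpos hx0 hlam).2 (by simpa [hμk] using hV₁ x hx)
  have hρV₂ (x) (hx : x ∈ V₂) (hx0 : x ≠ 0) : lam ≤ ρ x :=
    not_lt.1 fun h => ((rayleigh_lt_iff hρroot hpos hx0 hlam).1 h).not_ge
      (by simpa [hμk] using hV₂ x hx)
  have hρw : ρ w = lam := (hρV₁ w hw₁ hw0).antisymm (hρV₂ w hw₂ hw0)
  exact ⟨lam, hlam, ⟨μ, hμ, hchar, hμk⟩,
    isLeast_subspaceMaxima h₁ (by omega) hρV₁ hρV₂ hw₁ hw0 hρw,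
    isGreatest_subspaceMinima h₂ (by omega) hρV₂ hρV₁ hw₂ hw0 hρw⟩

/-- nonlinear variational principle (min-max form) on an interval of
positive type: for each `k` there is a `k`-th eigenvalue `λₖ ∈ (a,b)` of `T(·)`
satisfying the min-max and max-min characterizations of the Rayleigh functional,
with all extrema attained.  (`k : Fin n` is zero-based: dimension `k+1` subspaces
for the min-max, dimension `n-k` for the max-min.) -/
theorem nonlinear_variational_principle_positive_type
    (n : ℕ) (hn : 1 ≤ n) (a b : ℝ) (hab : a < b)
    (T T' : ℝ → Matrix (Fin n) (Fin n) ℂ)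
    (hTcont : ContinuousOn T (Set.Icc a b))
    (hTherm : ∀ μ ∈ Set.Icc a b, (T μ).IsHermitian)
    (hT'deriv : ∀ μ ∈ Set.Ioo a b, ∀ i j : Fin n,
      HasDerivAt (fun t : ℝ => T t i j) (T' μ i j) μ)
    (hT'cont : ContinuousOn T' (Set.Ioo a b))
    (ρ : (Fin n → ℂ) → ℝ)
    (hρcont : ContinuousOn ρ {x : Fin n → ℂ | x ≠ 0})
    (hρmem : ∀ x : Fin n → ℂ, x ≠ 0 → ρ x ∈ Set.Ioo a b)
    (hρroot : ∀ x : Fin n → ℂ, x ≠ 0 → star x ⬝ᵥ (T (ρ x)) *ᵥ x = 0)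
    (hρuniq : ∀ x : Fin n → ℂ, x ≠ 0 → ∀ μ ∈ Set.Ioo a b,
      star x ⬝ᵥ (T μ) *ᵥ x = 0 → μ = ρ x)
    (hpos : ∀ x : Fin n → ℂ, x ≠ 0 → ∀ μ ∈ Set.Ioo a b, μ ≠ ρ x →
      0 < (μ - ρ x) * (star x ⬝ᵥ (T μ) *ᵥ x).re) :
    ∀ k : Fin n, ∃ lam ∈ Set.Ioo a b,
      ZeroIsKthLargestEigenvalue (T lam) k ∧
      IsLeast {r : ℝ | ∃ S : Submodule ℂ (Fin n → ℂ), Module.finrank ℂ S = (k : ℕ) + 1 ∧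
        IsGreatest (ρ '' {x : Fin n → ℂ | x ∈ S ∧ x ≠ 0}) r} lam ∧
      IsGreatest {r : ℝ | ∃ S : Submodule ℂ (Fin n → ℂ), Module.finrank ℂ S = n - (k : ℕ) ∧
        IsLeast (ρ '' {x : Fin n → ℂ | x ∈ S ∧ x ≠ 0}) r} lam :=
  nonlinear_variational_principle_positive_type_general n a b T hTherm ρ hρcont hρmem hρroot hpos
end

section
/- (Action of the stabilized preconditioner.) If y ∈ ℂ^n satisfies w*y = 0 (equivalently Π*y = y) and b := Π M Π* y, then y = M_Π† b; that is, y = (I − (M⁻¹w w*)/(w*M⁻¹w)) M⁻¹ b. -/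
open Matrix

/-!
A rank-one update `1 - c • u v*` fixes `ker v*`, and kills `u` when `c (v* u) = 1`.
Since `w* y = 0`, `Π* y = y`, so `b = Π M y = M y - α w` for a scalar `α`, hence
`M⁻¹ b = y - α M⁻¹ w`; the projector along `M⁻¹ w` onto `ker w*` then removes the
`M⁻¹ w`-component and returns `y`.
-/

namespace Matrix

variable {m R : Type*} [DecidableEq m] [CommRing R]

theorem conjTranspose_one_sub_smul_vecMulVec [StarRing R] (c : R) (u v : m → R) :
    (1 - c • vecMulVec u v)ᴴ = 1 - star c • vecMulVec (star v) (star u) := by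
  rw [conjTranspose_sub, conjTranspose_one, conjTranspose_smul, conjTranspose_vecMulVec]

variable [Fintype m]

theorem one_sub_smul_vecMulVec_mulVec (c : R) (u v z : m → R) :
    (1 - c • vecMulVec u v) *ᵥ z = z - (c * (v ⬝ᵥ z)) • u := by
  rw [sub_mulVec, one_mulVec, smul_mulVec, vecMulVec_mulVec, op_smul_eq_smul, smul_smul]

theorem one_sub_smul_vecMulVec_mulVec_of_dotProduct_eq_zero (c : R) {u v z : m → R}
    (hz : v ⬝ᵥ z = 0) : (1 - c • vecMulVec u v) *ᵥ z = z := by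
  rw [one_sub_smul_vecMulVec_mulVec, hz, mul_zero, zero_smul, sub_zero]

theorem one_sub_smul_vecMulVec_mulVec_self {c : R} {u v : m → R} (hc : c * (v ⬝ᵥ u) = 1) :
    (1 - c • vecMulVec u v) *ᵥ u = 0 := by
  rw [one_sub_smul_vecMulVec_mulVec, hc, one_smul, sub_self]

end Matrix

theorem stabilized_preconditioner_action_general
    (n : ℕ) (M : Matrix (Fin n) (Fin n) ℂ) (hM : IsUnit M.det)
    (x w : Fin n → ℂ)
    (hwMw : star w ⬝ᵥ M⁻¹ *ᵥ w ≠ 0)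
    (P : Matrix (Fin n) (Fin n) ℂ)
    (hP : P = 1 - (star x ⬝ᵥ w)⁻¹ • vecMulVec w (star x))
    (MPd : Matrix (Fin n) (Fin n) ℂ)
    (hMPd : MPd = (1 - (star w ⬝ᵥ M⁻¹ *ᵥ w)⁻¹ • vecMulVec (M⁻¹ *ᵥ w) (star w)) * M⁻¹)
    (y bvec : Fin n → ℂ)
    (hy : star w ⬝ᵥ y = 0)
    (hb : bvec = (P * M * Pᴴ) *ᵥ y) :
    y = MPd *ᵥ bvec := by
  set α := (star x ⬝ᵥ w)⁻¹ * (star x ⬝ᵥ M *ᵥ y)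
  have hPy : Pᴴ *ᵥ y = y := by
    rw [hP, conjTranspose_one_sub_smul_vecMulVec, star_star]
    exact one_sub_smul_vecMulVec_mulVec_of_dotProduct_eq_zero _ hy
  have hMb : M⁻¹ *ᵥ bvec = y - α • M⁻¹ *ᵥ w := by
    rw [hb, ← mulVec_mulVec, hPy, ← mulVec_mulVec, hP, one_sub_smul_vecMulVec_mulVec,
      mulVec_sub, mulVec_smul, mulVec_mulVec, nonsing_inv_mul M hM, one_mulVec]
  have hMw := one_sub_smul_vecMulVec_mulVec_self (inv_mul_cancel₀ hwMw)
  rw [hMPd, ← mulVec_mulVec, hMb, mulVec_sub, mulVec_smul, hMw, smul_zero, sub_zero,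
    one_sub_smul_vecMulVec_mulVec_of_dotProduct_eq_zero _ hy]

/-- action of the stabilized preconditioner.  With
`Π = I − (w x*)/(x*w)` and `M_Π† = (I − (M⁻¹w w*)/(w*M⁻¹w)) M⁻¹`, if `w*y = 0`
and `b = Π M Π* y`, then `y = M_Π† b`. -/
theorem stabilized_preconditioner_action
    (n : ℕ) (M : Matrix (Fin n) (Fin n) ℂ) (hM : IsUnit M.det)
    (x w : Fin n → ℂ)
    (hxw : star x ⬝ᵥ w ≠ 0)
    (hwMw : star w ⬝ᵥ M⁻¹ *ᵥ w ≠ 0)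
    (P : Matrix (Fin n) (Fin n) ℂ)
    (hP : P = 1 - (star x ⬝ᵥ w)⁻¹ • vecMulVec w (star x))
    (MPd : Matrix (Fin n) (Fin n) ℂ)
    (hMPd : MPd = (1 - (star w ⬝ᵥ M⁻¹ *ᵥ w)⁻¹ • vecMulVec (M⁻¹ *ᵥ w) (star w)) * M⁻¹)
    (y bvec : Fin n → ℂ)
    (hy : star w ⬝ᵥ y = 0)
    (hb : bvec = (P * M * Pᴴ) *ᵥ y) :
    y = MPd *ᵥ bvec :=
  stabilized_preconditioner_action_general n M hM x w hwMw P hP MPd hMPd y bvec hy hb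
end
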